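/- arXiv:1412.4057 — 2 statements merged into one kernel-verified Lean document; each statement's English description precedes it below -/
import Mathlib

section
/- Every sequence {u_n} in H¹(ℝ³) satisfying I_a(u_n) → c_a, I_a′(u_n) → 0 and G_a(u_n) → 0 as n → ∞ is bounded in H¹(ℝ³). -/
noncomputable section

open MeasureTheory Real Set Filter Topology Metric

/-- Euclidean space `ℝ³`. -/
abbrev E3 : Type := EuclideanSpace ℝ (Fin 3)

/-- The (a.e. defined) gradient of a function `u : ℝ³ → ℝ`. -/
def grad (u : E3 → ℝ) (x : E3) : E3 := gradient u x

/-- The Newtonian (Poisson) potential `φ_u(x) = (1/4π) ∫ u(y)²/|x−y| dy`. -/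
def phiFun (u : E3 → ℝ) (x : E3) : ℝ :=
  (1 / (4 * π)) * ∫ y : E3, (u y) ^ 2 / ‖x - y‖

/-- Positive part `u⁺`. -/
def uplus (u : E3 → ℝ) (x : E3) : ℝ := max (u x) 0

/-- Membership in `H¹(ℝ³)` (differentiable representative with `u, ∇u ∈ L²`). -/
def MemH1 (u : E3 → ℝ) : Prop :=
  Differentiable ℝ u ∧ MemLp u 2 (volume : Measure E3) ∧
    MemLp (grad u) 2 (volume : Measure E3)

/-- Squared `H¹` norm: `∫|∇u|² + ∫u²`. -/
def H1normSq (u : E3 → ℝ) : ℝ :=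
  (∫ x : E3, ‖grad u x‖ ^ 2) + ∫ x : E3, (u x) ^ 2

/-- `H¹` norm. -/
def H1norm (u : E3 → ℝ) : ℝ := Real.sqrt (H1normSq u)

/-- `H¹` distance. -/
def H1dist (u v : E3 → ℝ) : ℝ := H1norm (u - v)

/-- The limiting energy functional `I_a`. -/
def Ia (a lam p : ℝ) (u : E3 → ℝ) : ℝ :=
  (1 / 2) * (∫ x : E3, ‖grad u x‖ ^ 2)
    + (a / 2) * (∫ x : E3, (u x) ^ 2)
    + (1 / 4) * (∫ x : E3, phiFun u x * (u x) ^ 2)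
    - (lam / p) * (∫ x : E3, uplus u x ^ p)
    - (1 / 6) * (∫ x : E3, uplus u x ^ 6)

/-- The functional `G_a = 2⟨I_a′(u),u⟩ − P_a(u)`. -/
def Ga (a lam p : ℝ) (u : E3 → ℝ) : ℝ :=
  (3 / 2) * (∫ x : E3, ‖grad u x‖ ^ 2)
    + (a / 2) * (∫ x : E3, (u x) ^ 2)
    + (3 / 4) * (∫ x : E3, phiFun u x * (u x) ^ 2)
    - ((2 * p - 3) / p) * lam * (∫ x : E3, uplus u x ^ p)
    - (3 / 2) * (∫ x : E3, uplus u x ^ 6)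

/-- The manifold `M_a = {u ∈ H¹ \ {0} : G_a(u) = 0}`. -/
def Ma (a lam p : ℝ) : Set (E3 → ℝ) :=
  {u | MemH1 u ∧ u ≠ 0 ∧ Ga a lam p u = 0}

/-- The scaling `u_t(x) = t² u(tx)`. -/
def scale (t : ℝ) (u : E3 → ℝ) : E3 → ℝ := fun x => t ^ 2 * u (t • x)

/-- The Fréchet derivative pairing `⟨I_a′(u), v⟩`. -/
def IaDeriv (a lam p : ℝ) (u v : E3 → ℝ) : ℝ :=
  (∫ x : E3, (inner ℝ (grad u x) (grad v x) : ℝ))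
    + a * (∫ x : E3, u x * v x)
    + (∫ x : E3, phiFun u x * u x * v x)
    - lam * (∫ x : E3, uplus u x ^ (p - 1) * v x)
    - (∫ x : E3, uplus u x ^ 5 * v x)

/-- Continuity of a path `γ : [0,1] → H¹(ℝ³)` w.r.t. the `H¹` distance. -/
def PathCts (γ : ℝ → E3 → ℝ) : Prop :=
  ∀ s ∈ Icc (0:ℝ) 1, ∀ ε > (0:ℝ), ∃ δ > (0:ℝ),
    ∀ t ∈ Icc (0:ℝ) 1, |t - s| < δ → H1dist (γ t) (γ s) < ε

/-- The admissible mountain-pass paths `Γ_a`. -/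
def GammaA (a lam p : ℝ) : Set (ℝ → E3 → ℝ) :=
  {γ | PathCts γ ∧ (∀ t ∈ Icc (0:ℝ) 1, MemH1 (γ t)) ∧ γ 0 = 0 ∧ Ia a lam p (γ 1) < 0}

/-- The mountain-pass level `c_a`. -/
def ca (a lam p : ℝ) : ℝ :=
  sInf ((fun γ => sSup ((fun t => Ia a lam p (γ t)) '' Icc (0:ℝ) 1)) '' GammaA a lam p)

/-- `⟨I_a′(u_n), ·⟩ → 0` in the dual of `H¹`. -/
def DerivTendstoZero (a lam p : ℝ) (u : ℕ → E3 → ℝ) : Prop :=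
  ∃ err : ℕ → ℝ, Tendsto err atTop (𝓝 0) ∧
    ∀ n, ∀ v : E3 → ℝ, MemH1 v → |IaDeriv a lam p (u n) v| ≤ err n * H1norm v

/-- Critical point of `I_a` on `H¹(ℝ³)`. -/
def IsCritA (a lam p : ℝ) (u : E3 → ℝ) : Prop :=
  ∀ v : E3 → ℝ, MemH1 v → IaDeriv a lam p u v = 0

/-- Best Sobolev constant for `D^{1,2}(ℝ³) ↪ L⁶(ℝ³)`. -/
def SobolevS : ℝ :=
  sInf {s | ∃ u : E3 → ℝ, Differentiable ℝ u ∧ MemLp u 6 (volume : Measure E3) ∧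
    MemLp (grad u) 2 (volume : Measure E3) ∧ (∫ x : E3, |u x| ^ 6) = 1 ∧
    s = ∫ x : E3, ‖grad u x‖ ^ 2}

/-- The set `S_a` of ground states `U` of the limiting problem with `U(0) = max U`. -/
def SaSet (a lam p : ℝ) : Set (E3 → ℝ) :=
  {U | MemH1 U ∧ (∀ x, 0 < U x) ∧ IsCritA a lam p U ∧ Ia a lam p U = ca a lam p ∧
    ∀ x, U x ≤ U 0}

/-!
The combination `(2p − 3) I_a − G_a` cancels the `λ`-term and equals
`(p − 3)∫|∇u|² + a(p − 2)∫u² + ((p − 3)/2)∫φ_u u² + ((6 − p)/3)∫(u⁺)⁶`,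
all of whose coefficients are nonnegative for `3 < p ≤ 6`. It therefore dominates
`min (p − 3) (a(p − 2))` times the squared `H¹` norm, while along the sequence it converges to
`(2p − 3) c_a`, hence stays bounded.
-/

lemma phiFun_nonneg (u : E3 → ℝ) (x : E3) : 0 ≤ phiFun u x :=
  mul_nonneg (by positivity) (integral_nonneg fun _ => by positivity)

lemma mul_Ia_sub_Ga_eq {p : ℝ} (hp : p ≠ 0) (a lam : ℝ) (u : E3 → ℝ) :
    (2 * p - 3) * Ia a lam p u - Ga a lam p u =
      (p - 3) * (∫ x : E3, ‖grad u x‖ ^ 2) + a * (p - 2) * (∫ x : E3, (u x) ^ 2)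
        + (p - 3) / 2 * (∫ x : E3, phiFun u x * (u x) ^ 2)
        + (6 - p) / 3 * (∫ x : E3, uplus u x ^ 6) := by
  unfold Ia Ga
  field_simp
  ring

lemma min_mul_H1normSq_le_mul_Ia_sub_Ga {p : ℝ} (hp : 3 ≤ p) (hp' : p ≤ 6)
    (a lam : ℝ) (u : E3 → ℝ) :
    min (p - 3) (a * (p - 2)) * H1normSq u ≤ (2 * p - 3) * Ia a lam p u - Ga a lam p u := by
  rw [mul_Ia_sub_Ga_eq (by linarith), H1normSq, mul_add]
  have hgrad : 0 ≤ ∫ x : E3, ‖grad u x‖ ^ 2 := integral_nonneg fun _ => by positivity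
  have hsq : 0 ≤ ∫ x : E3, (u x) ^ 2 := integral_nonneg fun _ => by positivity
  have hphi : 0 ≤ ∫ x : E3, phiFun u x * (u x) ^ 2 :=
    integral_nonneg fun x => mul_nonneg (phiFun_nonneg u x) (by positivity)
  have hsix : 0 ≤ ∫ x : E3, uplus u x ^ 6 := integral_nonneg fun _ => by positivity
  have := mul_le_mul_of_nonneg_right (min_le_left (p - 3) (a * (p - 2))) hgrad
  have := mul_le_mul_of_nonneg_right (min_le_right (p - 3) (a * (p - 2))) hsq
  have : 0 ≤ (p - 3) / 2 * ∫ x : E3, phiFun u x * (u x) ^ 2 :=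
    mul_nonneg (by linarith) hphi
  have : 0 ≤ (6 - p) / 3 * ∫ x : E3, uplus u x ^ 6 := mul_nonneg (by linarith) hsix
  linarith

theorem statement_6_general (a lam p : ℝ) (ha : 0 < a)
    (hp : 3 < p) (hp' : p ≤ 4)
    (u : ℕ → E3 → ℝ)
    (hI : Tendsto (fun n => Ia a lam p (u n)) atTop (𝓝 (ca a lam p)))
    (hG : Tendsto (fun n => Ga a lam p (u n)) atTop (𝓝 0)) :
    ∃ C : ℝ, ∀ n, H1norm (u n) ≤ C := by
  set m := min (p - 3) (a * (p - 2))
  have hm : 0 < m := lt_min (by linarith) (mul_pos ha (by linarith))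
  obtain ⟨M, hM⟩ := ((hI.const_mul (2 * p - 3)).sub hG).bddAbove_range
  refine ⟨√(M / m), fun n => Real.sqrt_le_sqrt ?_⟩
  rw [le_div_iff₀' hm]
  exact (min_mul_H1normSq_le_mul_Ia_sub_Ga hp.le (by linarith) a lam (u n)).trans
    (hM (Set.mem_range_self n))

/-- every sequence with `I_a(u_n) → c_a`, `I_a′(u_n) → 0`, `G_a(u_n) → 0`
is bounded in `H¹(ℝ³)`. -/
theorem statement_6 (a lam p : ℝ) (ha : 0 < a) (hlam : 0 < lam)
    (hp : 3 < p) (hp' : p ≤ 4)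
    (u : ℕ → E3 → ℝ) (hmem : ∀ n, MemH1 (u n))
    (hI : Tendsto (fun n => Ia a lam p (u n)) atTop (𝓝 (ca a lam p)))
    (hI' : DerivTendstoZero a lam p u)
    (hG : Tendsto (fun n => Ga a lam p (u n)) atTop (𝓝 0)) :
    ∃ C : ℝ, ∀ n, H1norm (u n) ≤ C :=
  statement_6_general a lam p ha hp hp' u hI hG
end
end

section
/- Let d₀ be the constant from the compactness lemma for X_ε^{d₀}. For any d ∈ (0, d₀) there exist ε_d > 0, ρ_d > 0 and ω_d > 0 such that ‖J_ε′(u)‖_{*,ε,R} ≥ ω_d > 0 for all u ∈ J_ε^{c_{V₀}+ρ_d} ∩ (X_ε^{d₀} \ X_ε^{d}) ∩ H₀¹(B_R(0)) whenever ε ∈ (0, ε_d) and R ≥ R₀/ε. -/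
noncomputable section

open MeasureTheory Real Set Filter Topology Metric

/-! ### The penalization scheme -/

/-- Squared `H_ε` norm: `∫|∇u|² + ∫V(εx)u²`. -/
def HepsNormSq (V : E3 → ℝ) (ε : ℝ) (u : E3 → ℝ) : ℝ :=
  (∫ x : E3, ‖grad u x‖ ^ 2) + ∫ x : E3, V (ε • x) * (u x) ^ 2

/-- Membership in the weighted Sobolev space `H_ε`. -/
def MemHeps (V : E3 → ℝ) (ε : ℝ) (u : E3 → ℝ) : Prop :=
  Differentiable ℝ u ∧ MemLp (grad u) 2 (volume : Measure E3) ∧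
    Integrable (fun x : E3 => V (ε • x) * (u x) ^ 2) (volume : Measure E3)

/-- `H_ε` norm. -/
def HepsNorm (V : E3 → ℝ) (ε : ℝ) (u : E3 → ℝ) : ℝ := Real.sqrt (HepsNormSq V ε u)

/-- `H_ε` distance. -/
def HepsDist (V : E3 → ℝ) (ε : ℝ) (u v : E3 → ℝ) : ℝ := HepsNorm V ε (u - v)

/-- The rescaled energy functional `I_ε`. -/
def Ieps (V : E3 → ℝ) (lam p ε : ℝ) (u : E3 → ℝ) : ℝ :=
  (1 / 2) * (∫ x : E3, ‖grad u x‖ ^ 2)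
    + (1 / 2) * (∫ x : E3, V (ε • x) * (u x) ^ 2)
    + (1 / 4) * (∫ x : E3, phiFun u x * (u x) ^ 2)
    - (lam / p) * (∫ x : E3, uplus u x ^ p)
    - (1 / 6) * (∫ x : E3, uplus u x ^ 6)

open Classical in
/-- The penalization weight `χ_ε` (`0` on `Λ/ε`, `ε⁻¹` outside). -/
def chiEps (Λ : Set E3) (ε : ℝ) (x : E3) : ℝ :=
  if ε • x ∈ Λ then 0 else ε⁻¹

/-- The penalization term `Q_ε(v) = ((∫χ_ε v² − 1)₊)²`. -/
def Qeps (Λ : Set E3) (ε : ℝ) (u : E3 → ℝ) : ℝ :=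
  (max ((∫ x : E3, chiEps Λ ε x * (u x) ^ 2) - 1) 0) ^ 2

/-- The penalized functional `J_ε = I_ε + Q_ε`. -/
def Jeps (V : E3 → ℝ) (Λ : Set E3) (lam p ε : ℝ) (u : E3 → ℝ) : ℝ :=
  Ieps V lam p ε u + Qeps Λ ε u

/-- The derivative pairing `⟨I_ε′(u), v⟩`. -/
def IepsDeriv (V : E3 → ℝ) (lam p ε : ℝ) (u v : E3 → ℝ) : ℝ :=
  (∫ x : E3, (inner ℝ (grad u x) (grad v x) : ℝ))
    + (∫ x : E3, V (ε • x) * u x * v x)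
    + (∫ x : E3, phiFun u x * u x * v x)
    - lam * (∫ x : E3, uplus u x ^ (p - 1) * v x)
    - (∫ x : E3, uplus u x ^ 5 * v x)

/-- The derivative pairing `⟨J_ε′(u), v⟩`. -/
def JepsDeriv (V : E3 → ℝ) (Λ : Set E3) (lam p ε : ℝ) (u v : E3 → ℝ) : ℝ :=
  IepsDeriv V lam p ε u v
    + 4 * max ((∫ x : E3, chiEps Λ ε x * (u x) ^ 2) - 1) 0
        * (∫ x : E3, chiEps Λ ε x * u x * v x)

/-- The comparison functions `W_{ε,t}(x) = t²φ(εx)U*(tx)`. -/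
def Wfun (φcut Ustar : E3 → ℝ) (ε t : ℝ) : E3 → ℝ :=
  fun x => t ^ 2 * φcut (ε • x) * Ustar (t • x)

/-- Continuity of a path `[0,1] → H_ε` w.r.t. the `H_ε` distance. -/
def PathCtsEps (V : E3 → ℝ) (ε : ℝ) (γ : ℝ → E3 → ℝ) : Prop :=
  ∀ s ∈ Icc (0:ℝ) 1, ∀ η > (0:ℝ), ∃ ζ > (0:ℝ),
    ∀ t ∈ Icc (0:ℝ) 1, |t - s| < ζ → HepsDist V ε (γ t) (γ s) < η

/-- The admissible paths `Γ_ε` for the penalized mountain pass. -/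
def GammaEps (V : E3 → ℝ) (ε : ℝ) (φcut Ustar : E3 → ℝ) (t0 : ℝ) :
    Set (ℝ → E3 → ℝ) :=
  {γ | PathCtsEps V ε γ ∧ (∀ s ∈ Icc (0:ℝ) 1, MemHeps V ε (γ s)) ∧
    γ 0 = 0 ∧ γ 1 = Wfun φcut Ustar ε t0}

/-- The penalized mountain-pass value `c_ε`. -/
def ceps (V : E3 → ℝ) (Λ : Set E3) (lam p : ℝ) (φcut Ustar : E3 → ℝ) (t0 ε : ℝ) : ℝ :=
  sInf ((fun γ => sSup ((fun s => Jeps V Λ lam p ε (γ s)) '' Icc (0:ℝ) 1)) ''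
    GammaEps V ε φcut Ustar t0)

/-- The value `c̃_ε = max_{s∈[0,1]} J_ε(W_{ε,st₀})`. -/
def tceps (V : E3 → ℝ) (Λ : Set E3) (lam p : ℝ) (φcut Ustar : E3 → ℝ) (t0 ε : ℝ) : ℝ :=
  sSup ((fun s => Jeps V Λ lam p ε (Wfun φcut Ustar ε (s * t0))) '' Icc (0:ℝ) 1)

/-- Membership in `H₀¹(B_R(0))`, viewed inside `H¹(ℝ³)` by zero extension. -/
def MemH10 (R : ℝ) (v : E3 → ℝ) : Prop :=
  Differentiable ℝ v ∧ MemLp v 2 (volume : Measure E3) ∧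
    MemLp (grad v) 2 (volume : Measure E3) ∧ ∀ x : E3, R ≤ ‖x‖ → v x = 0

/-- The dual norm `‖J_ε′(u)‖_{*,ε,R}` on `(H₀¹(B_R(0)))⁻¹`. -/
def dualNormJ (V : E3 → ℝ) (Λ : Set E3) (lam p ε R : ℝ) (u : E3 → ℝ) : ℝ :=
  sSup {d | ∃ v : E3 → ℝ, MemH10 R v ∧ HepsNormSq V ε v ≤ 1 ∧
    d = JepsDeriv V Λ lam p ε u v}

/-- The full dual norm `‖J_ε′(u)‖_{(H_ε)⁻¹}`. -/
def dualNormJfull (V : E3 → ℝ) (Λ : Set E3) (lam p ε : ℝ) (u : E3 → ℝ) : ℝ :=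
  sSup {d | ∃ v : E3 → ℝ, MemHeps V ε v ∧ HepsNormSq V ε v ≤ 1 ∧
    d = JepsDeriv V Λ lam p ε u v}

/-- The closed `β`-neighborhood `M^β` of a set. -/
def Mbeta (Mset : Set E3) (β : ℝ) : Set E3 := {y | Metric.infDist y Mset ≤ β}

/-- The set `X_ε = {φ(εx − x′)w(x − x′/ε) : x′ ∈ M^β, w ∈ S_{V₀}}`. -/
def Xeps (φcut : E3 → ℝ) (SV0 : Set (E3 → ℝ)) (Mb : Set E3) (ε : ℝ) :
    Set (E3 → ℝ) :=
  {u | ∃ x' ∈ Mb, ∃ w ∈ SV0, u = fun x => φcut (ε • x - x') * w (x - ε⁻¹ • x')}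

/-- The `H_ε`-neighborhood `X_ε^a = {u ∈ H_ε : dist_{H_ε}(u, X_ε) ≤ a}`. -/
def XepsNbhd (V : E3 → ℝ) (φcut : E3 → ℝ) (SV0 : Set (E3 → ℝ)) (Mb : Set E3)
    (ε a : ℝ) : Set (E3 → ℝ) :=
  {u | MemHeps V ε u ∧ sInf ((fun v => HepsDist V ε u v) '' Xeps φcut SV0 Mb ε) ≤ a}

/-- The property of `d₀` asserted by the compactness lemma (Lemma 4.3): part (i) for
sequences supported in balls `B_{R_{ε_i}}(0)`, part (ii) without the support
restriction (with the full dual norm). -/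
def CompactnessConstant (V : E3 → ℝ) (Λ : Set E3) (lam p V0 R0 β : ℝ)
    (φcut : E3 → ℝ) (Mset : Set E3) (d0 : ℝ) : Prop :=
  0 < d0 ∧
  (∀ (εs Rs : ℕ → ℝ) (us : ℕ → E3 → ℝ),
    (∀ i, 0 < εs i) → Tendsto εs atTop (𝓝 0) →
    (∀ i, R0 / εs i ≤ Rs i) →
    (∀ i, us i ∈ XepsNbhd V φcut (SaSet V0 lam p) (Mbeta Mset β) (εs i) d0) →
    (∀ i, MemH10 (Rs i) (us i)) →
    Filter.limsup (fun i => Jeps V Λ lam p (εs i) (us i)) atTop ≤ ca V0 lam p →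
    Tendsto (fun i => dualNormJ V Λ lam p (εs i) (Rs i) (us i)) atTop (𝓝 0) →
    ∃ σ : ℕ → ℕ, StrictMono σ ∧ ∃ ys : ℕ → E3, ∃ x₀ ∈ Mset, ∃ U ∈ SaSet V0 lam p,
      Tendsto (fun i => ‖εs (σ i) • ys i - x₀‖) atTop (𝓝 0) ∧
      Tendsto (fun i => HepsDist V (εs (σ i)) (us (σ i))
        (fun x => φcut (εs (σ i) • x - εs (σ i) • ys i) * U (x - ys i)))
        atTop (𝓝 0)) ∧
  (∀ (εs : ℕ → ℝ) (us : ℕ → E3 → ℝ),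
    (∀ i, 0 < εs i) → Tendsto εs atTop (𝓝 0) →
    (∀ i, us i ∈ XepsNbhd V φcut (SaSet V0 lam p) (Mbeta Mset β) (εs i) d0) →
    Filter.limsup (fun i => Jeps V Λ lam p (εs i) (us i)) atTop ≤ ca V0 lam p →
    Tendsto (fun i => dualNormJfull V Λ lam p (εs i) (us i)) atTop (𝓝 0) →
    ∃ σ : ℕ → ℕ, StrictMono σ ∧ ∃ ys : ℕ → E3, ∃ x₀ ∈ Mset, ∃ U ∈ SaSet V0 lam p,
      Tendsto (fun i => ‖εs (σ i) • ys i - x₀‖) atTop (𝓝 0) ∧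
      Tendsto (fun i => HepsDist V (εs (σ i)) (us (σ i))
        (fun x => φcut (εs (σ i) • x - εs (σ i) • ys i) * U (x - ys i)))
        atTop (𝓝 0))

/-! ### Auxiliary lemmas -/

lemma grad_zero_fun : grad (fun _ : E3 => (0:ℝ)) = fun _ => 0 := by
  funext x; simp [grad, gradient_const]

lemma Ia_zero (a lam p : ℝ) (hp : p ≠ 0) : Ia a lam p 0 = 0 := by
  have hg : grad (0 : E3 → ℝ) = fun _ => 0 := grad_zero_fun
  simp [Ia, uplus, hg, Real.zero_rpow hp]

lemma ca_nonneg (a lam p : ℝ) (hp : p ≠ 0) : 0 ≤ ca a lam p := by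
  rw [ca]
  rcases eq_empty_or_nonempty (GammaA a lam p) with h | h
  · simp [h, Real.sInf_empty]
  · refine le_csInf (h.image _) ?_
    rintro b ⟨γ, hγ, rfl⟩
    show (0:ℝ) ≤ sSup ((fun t => Ia a lam p (γ t)) '' Icc (0:ℝ) 1)
    have h0 : (0:ℝ) ∈ (fun t => Ia a lam p (γ t)) '' Icc (0:ℝ) 1 := by
      refine ⟨0, ⟨le_refl 0, zero_le_one⟩, ?_⟩
      show Ia a lam p (γ 0) = 0
      rw [hγ.2.2.1, Ia_zero a lam p hp]
    by_cases hb : BddAbove ((fun t => Ia a lam p (γ t)) '' Icc (0:ℝ) 1)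
    · exact le_csSup hb h0
    · rw [Real.sSup_of_not_bddAbove hb]

lemma jepsDeriv_zero (V : E3 → ℝ) (Λ : Set E3) (lam p ε : ℝ) (u : E3 → ℝ) :
    JepsDeriv V Λ lam p ε u (fun _ => 0) = 0 := by
  simp [JepsDeriv, IepsDeriv, grad_zero_fun]

lemma dualNormJ_nonneg (V : E3 → ℝ) (Λ : Set E3) (lam p ε R : ℝ) (u : E3 → ℝ) :
    0 ≤ dualNormJ V Λ lam p ε R u := by
  rw [dualNormJ]
  have h0 : (0:ℝ) ∈ {d | ∃ v : E3 → ℝ, MemH10 R v ∧ HepsNormSq V ε v ≤ 1 ∧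
      d = JepsDeriv V Λ lam p ε u v} := by
    refine ⟨fun _ => 0, ⟨differentiable_const 0, MemLp.zero', ?_, fun x _ => rfl⟩, ?_, ?_⟩
    · rw [grad_zero_fun]; exact MemLp.zero'
    · have : HepsNormSq V ε (fun _ => 0) = 0 := by simp [HepsNormSq, grad_zero_fun]
      rw [this]; norm_num
    · exact (jepsDeriv_zero V Λ lam p ε u).symm
  by_cases hb : BddAbove {d | ∃ v : E3 → ℝ, MemH10 R v ∧ HepsNormSq V ε v ≤ 1 ∧
      d = JepsDeriv V Λ lam p ε u v}
  · exact le_csSup hb h0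
  · rw [Real.sSup_of_not_bddAbove hb]

/-- Lemma 4.4: a uniform lower bound on the dual norm of `J_ε′` away
from `X_ε^d`, below energy level `c_{V₀} + ρ_d`, for small `ε` and `R ≥ R₀/ε`. -/
theorem statement_13 (p lam : ℝ) (hp : 3 < p) (hp' : p ≤ 4) (hlam : 0 < lam)
    (V : E3 → ℝ) (hVcont : Continuous V)
    (α : ℝ) (hα : 0 < α) (hαinf : IsGLB (Set.range V) α)
    (Λ : Set E3) (hΛopen : IsOpen Λ) (hΛbdd : Bornology.IsBounded Λ) (hΛne : Λ.Nonempty)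
    (V0 : ℝ) (hV0 : V0 = sInf (V '' Λ)) (hV2 : V0 < sInf (V '' frontier Λ))
    (Mset : Set E3) (hMset : Mset = {x | x ∈ Λ ∧ V x = V0}) (hM0 : (0:E3) ∈ Mset)
    (δM β : ℝ) (hδM : 10 * δM = sInf (Set.image2 dist Mset Λᶜ))
    (hβ : 0 < β) (hβδ : β < δM)
    (φcut : E3 → ℝ) (hφsmooth : ContDiff ℝ (⊤ : ℕ∞) φcut)
    (hφrange : ∀ x, 0 ≤ φcut x ∧ φcut x ≤ 1)
    (hφone : ∀ x : E3, ‖x‖ ≤ β → φcut x = 1)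
    (hφzero : ∀ x : E3, 2 * β ≤ ‖x‖ → φcut x = 0)
    (R0 : ℝ) (hR0 : 0 < R0) (hR0Λ : Λ ⊆ Metric.ball (0:E3) R0)
    (d0 : ℝ) (hd0 : CompactnessConstant V Λ lam p V0 R0 β φcut Mset d0) :
    ∀ d : ℝ, 0 < d → d < d0 →
      ∃ εd > (0:ℝ), ∃ ρd > (0:ℝ), ∃ ωd > (0:ℝ),
        ∀ ε : ℝ, 0 < ε → ε < εd → ∀ R : ℝ, R0 / ε ≤ R →
          ∀ u : E3 → ℝ, MemH10 R u →
            u ∈ XepsNbhd V φcut (SaSet V0 lam p) (Mbeta Mset β) ε d0 →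
            u ∉ XepsNbhd V φcut (SaSet V0 lam p) (Mbeta Mset β) ε d →
            Jeps V Λ lam p ε u ≤ ca V0 lam p + ρd →
            ωd ≤ dualNormJ V Λ lam p ε R u := by
  intro d hd hdd0
  by_contra hcon
  push_neg at hcon
  have h := fun n : ℕ => hcon (1/(n+1)) (by positivity) (1/(n+1)) (by positivity)
    (1/(n+1)) (by positivity)
  choose εs hεpos hεlt Rs hRs us hH10 hmem hnotmem hJ hdual using h
  -- εs tends to 0
  have honediv : Tendsto (fun n : ℕ => 1/((n:ℝ)+1)) atTop (𝓝 0) :=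
    tendsto_one_div_add_atTop_nhds_zero_nat
  have hεtends : Tendsto εs atTop (𝓝 0) :=
    squeeze_zero (fun n => (hεpos n).le) (fun n => (hεlt n).le) honediv
  have hdualtends : Tendsto (fun n => dualNormJ V Λ lam p (εs n) (Rs n) (us n))
      atTop (𝓝 0) :=
    squeeze_zero (fun n => dualNormJ_nonneg V Λ lam p (εs n) (Rs n) (us n))
      (fun n => (hdual n).le) honediv
  have hp0 : p ≠ 0 := by linarith
  have hca : (0:ℝ) ≤ ca V0 lam p := ca_nonneg V0 lam p hp0
  -- limsup bound
  have hlimsup : Filter.limsup (fun n => Jeps V Λ lam p (εs n) (us n)) atTop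
      ≤ ca V0 lam p := by
    rw [Filter.limsup_eq]
    by_cases hbd : BddBelow {a : ℝ | ∀ᶠ n in atTop, Jeps V Λ lam p (εs n) (us n) ≤ a}
    · refine le_of_forall_pos_le_add fun η hη => csInf_le hbd ?_
      obtain ⟨N, hN⟩ := exists_nat_one_div_lt hη
      refine eventually_atTop.2 ⟨N, fun n hn => ?_⟩
      refine (hJ n).trans (by
        have h1 : 1/((n:ℝ)+1) ≤ 1/((N:ℝ)+1) := by
          apply one_div_le_one_div_of_le (by positivity)
          exact_mod_cast Nat.succ_le_succ hn
        linarith)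
    · rw [Real.sInf_of_not_bddBelow hbd]; exact hca
  obtain ⟨hd0pos, hpart1, _⟩ := hd0
  obtain ⟨σ, hσ, ys, x₀, hx₀, U, hU, hconv1, hconv2⟩ :=
    hpart1 εs Rs us hεpos hεtends hRs hmem hH10 hlimsup hdualtends
  -- pick a large index
  have hev1 : ∀ᶠ i in atTop, ‖εs (σ i) • ys i - x₀‖ < β :=
    hconv1.eventually (gt_mem_nhds hβ)
  have hev2 : ∀ᶠ i in atTop, HepsDist V (εs (σ i)) (us (σ i))
      (fun x => φcut (εs (σ i) • x - εs (σ i) • ys i) * U (x - ys i)) < d :=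
    hconv2.eventually (gt_mem_nhds hd)
  obtain ⟨i, hi1, hi2⟩ := (hev1.and hev2).exists
  set ε' := εs (σ i) with hε'
  have hε'pos : 0 < ε' := hεpos (σ i)
  set w : E3 → ℝ := fun x => φcut (ε' • x - ε' • ys i) * U (x - ys i) with hw
  -- w belongs to X_{ε'}
  have hwX : w ∈ Xeps φcut (SaSet V0 lam p) (Mbeta Mset β) ε' := by
    refine ⟨ε' • ys i, ?_, U, hU, ?_⟩
    · have : Metric.infDist (ε' • ys i) Mset ≤ dist (ε' • ys i) x₀ :=
        Metric.infDist_le_dist_of_mem hx₀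
      rw [dist_eq_norm] at this
      exact le_trans this (le_of_lt hi1)
    · funext x
      have : ε'⁻¹ • (ε' • ys i) = ys i := inv_smul_smul₀ (ne_of_gt hε'pos) _
      rw [this]
  -- the inf distance is below d
  have hinf : sInf ((fun v => HepsDist V ε' (us (σ i)) v) ''
      Xeps φcut (SaSet V0 lam p) (Mbeta Mset β) ε') ≤ d := by
    have hbdd : BddBelow ((fun v => HepsDist V ε' (us (σ i)) v) ''
        Xeps φcut (SaSet V0 lam p) (Mbeta Mset β) ε') := by
      refine ⟨0, ?_⟩
      rintro r ⟨v, _, rfl⟩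
      exact Real.sqrt_nonneg _
    exact le_trans (csInf_le hbdd ⟨w, hwX, rfl⟩) (le_of_lt hi2)
  exact hnotmem (σ i) ⟨(hmem (σ i)).1, hinf⟩
end
end
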